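/- Let A be a finite set of strings {A_1,...,A_L} and W a common subsequence of all strings in A. Then W is a maximal common subsequence of A if and only if for every k with 0 ≤ k ≤ |W|, the L substrings Middle(A_l, W, k), l = 1,...,L, share no common character. -/

import Mathlib

open List

/-- Length of the shortest prefix of `A` containing `W` as a subsequence. -/
noncomputable def minPrefixLen {α : Type*} (A W : List α) : ℕ :=
  sInf {n | W <+ A.take n}

/-- Length of the shortest suffix of `A` containing `W` as a subsequence. -/
noncomputable def minSuffixLen {α : Type*} (A W : List α) : ℕ :=
  sInf {n | W <+ A.drop (A.length - n)}

/-- `Middle A W k`: what remains of `A` after deleting the shortest prefix containing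
`W.take k` as a subsequence and the shortest suffix containing `W.drop k`. -/
noncomputable def Middle {α : Type*} (A W : List α) (k : ℕ) : List α :=
  (A.take (A.length - minSuffixLen A (W.drop k))).drop (minPrefixLen A (W.take k))

/-- `W` is a common subsequence of all strings in `𝒜`. -/
def IsCommonSubseq {α : Type*} (𝒜 : Finset (List α)) (W : List α) : Prop :=
  ∀ A ∈ 𝒜, W <+ A

/-- `W` is a maximal common subsequence of `𝒜`: it is a common subsequence and
inserting any single character at any position never yields a common subsequence. -/
def IsMCS {α : Type*} (𝒜 : Finset (List α)) (W : List α) : Prop :=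
  IsCommonSubseq 𝒜 W ∧
    ∀ (c : α) (k : ℕ), k ≤ W.length →
      ¬ IsCommonSubseq 𝒜 (W.take k ++ c :: W.drop k)

/-! Embedding `W(0,k]` into `A` as early as possible and `W(k,|W|]` as late as possible leaves
the widest gap between them, namely `Middle A W k`. Hence a character `c` can be inserted at
position `k` of `W` inside `A` exactly when `c` occurs in `Middle A W k`, and the theorem follows
by quantifying over the strings of the set. -/

namespace List

variable {α : Type*}

theorem drop_take_sublist_drop_take (l : List α) {i j m n : ℕ} (hij : i ≤ j) (hmn : m ≤ n) :
    (l.take m).drop j <+ (l.take n).drop i :=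
  (drop_sublist_drop_left _ hij).trans ((take_sublist_take_left hmn).drop i)

theorem take_append_drop_take_append_drop (l : List α) {i j : ℕ} (hij : i ≤ j) :
    l.take i ++ ((l.take j).drop i ++ l.drop j) = l := by
  conv_rhs => rw [← take_append_drop j l, ← take_append_drop i (l.take j),
    take_take, min_eq_left hij]
  rw [append_assoc]

end List

open List

section MinLen

variable {α : Type*} {A U V : List α}

theorem sublist_take_minPrefixLen (h : U <+ A) : U <+ A.take (minPrefixLen A U) :=
  Nat.sInf_mem (⟨A.length, by simpa using h⟩ : {n | U <+ A.take n}.Nonempty)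

theorem minPrefixLen_le {n : ℕ} (h : U <+ A.take n) : minPrefixLen A U ≤ n :=
  Nat.sInf_le h

theorem sublist_drop_minSuffixLen (h : V <+ A) :
    V <+ A.drop (A.length - minSuffixLen A V) :=
  Nat.sInf_mem (⟨A.length, by simpa using h⟩ : {n | V <+ A.drop (A.length - n)}.Nonempty)

theorem minSuffixLen_le {n : ℕ} (h : V <+ A.drop (A.length - n)) : minSuffixLen A V ≤ n :=
  Nat.sInf_le h

theorem minPrefixLen_le_append {r t : List α} (h : U <+ r) :
    minPrefixLen (r ++ t) U ≤ r.length :=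
  minPrefixLen_le (by rwa [take_left])

theorem minSuffixLen_le_append {r t : List α} (h : V <+ t) :
    minSuffixLen (r ++ t) V ≤ t.length :=
  minSuffixLen_le (by rwa [length_append, Nat.add_sub_cancel, drop_left])

theorem minPrefixLen_add_minSuffixLen_le (h : U ++ V <+ A) :
    minPrefixLen A U + minSuffixLen A V ≤ A.length := by
  obtain ⟨r, t, rfl, hU, hV⟩ := append_sublist_iff.mp h
  have hp := minPrefixLen_le_append (t := t) hU
  have hs := minSuffixLen_le_append (r := r) hV
  rw [length_append]
  omega

theorem append_cons_sublist_iff (h : U ++ V <+ A) (c : α) :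
    U ++ c :: V <+ A ↔
      c ∈ (A.take (A.length - minSuffixLen A V)).drop (minPrefixLen A U) := by
  constructor
  · intro hc
    obtain ⟨r, t, rfl, hU, hcV⟩ := append_sublist_iff.mp hc
    obtain ⟨t₁, t₂, rfl, hct₁, hV⟩ := cons_sublist_iff.mp hcV
    have hp : minPrefixLen (r ++ (t₁ ++ t₂)) U ≤ r.length := minPrefixLen_le_append hU
    have hs : minSuffixLen (r ++ (t₁ ++ t₂)) V ≤ t₂.length := by
      rw [← append_assoc]
      exact minSuffixLen_le_append hV
    have ht₁ : t₁ = ((r ++ (t₁ ++ t₂)).take ((r ++ (t₁ ++ t₂)).length - t₂.length)).drop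
        r.length := by
      simp [← append_assoc, take_left']
    exact (drop_take_sublist_drop_take _ hp (by omega)).subset (ht₁ ▸ hct₁)
  · intro hc
    have hps := minPrefixLen_add_minSuffixLen_le h
    rw [← take_append_drop_take_append_drop A
      (by omega : minPrefixLen A U ≤ A.length - minSuffixLen A V)]
    exact (sublist_take_minPrefixLen ((sublist_append_left U V).trans h)).append
      ((singleton_sublist.mpr hc).append
        (sublist_drop_minSuffixLen ((sublist_append_right U V).trans h)))

end MinLen

theorem take_append_cons_drop_sublist_iff_mem_Middle {α : Type*} {A W : List α} (h : W <+ A)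
    (c : α) (k : ℕ) : W.take k ++ c :: W.drop k <+ A ↔ c ∈ Middle A W k :=
  append_cons_sublist_iff (by rwa [take_append_drop]) c

theorem stmt1 {α : Type*} (𝒜 : Finset (List α)) (W : List α)
    (hW : IsCommonSubseq 𝒜 W) :
    IsMCS 𝒜 W ↔
      ∀ k : ℕ, k ≤ W.length → ¬ ∃ c : α, ∀ A ∈ 𝒜, c ∈ Middle A W k := by
  have hinsert : ∀ (c : α) (k : ℕ),
      IsCommonSubseq 𝒜 (W.take k ++ c :: W.drop k) ↔ ∀ A ∈ 𝒜, c ∈ Middle A W k :=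
    fun c k => forall₂_congr fun A hA =>
      take_append_cons_drop_sublist_iff_mem_Middle (hW A hA) c k
  simp only [IsMCS, hW, hinsert, true_and, not_exists]
  exact ⟨fun h k hk c => h c k hk, fun h c k hk => h k hk c⟩
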